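/- (Carleson embedding theorem, dyadic form.) Let 𝒬 be the tree of partition sets of a filtered σ-finite measure space, and let (a_Q)_{Q∈𝒬} be nonnegative numbers satisfying Σ_{Q ⊆ P} a_Q ≤ μ(P) for every P ∈ 𝒬. Then for every f ∈ L^2(μ), Σ_{Q∈𝒬} a_Q ⟨|f|⟩_Q^2 ≤ 4 ‖f‖_{L^2(μ)}^2. -/

import Mathlib

open MeasureTheory

/-- A filtered structure on a measure space: for each `n ∈ ℤ`, a countable partition
`part n` of `Ω` into measurable sets of finite positive measure, with `part (n+1)`
refining `part n`. -/
structure MartingaleGrid (Ω : Type*) [MeasurableSpace Ω] (μ : Measure Ω) where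
  part : ℤ → Set (Set Ω)
  countable : ∀ n, (part n).Countable
  measurableSet : ∀ n, ∀ Q ∈ part n, MeasurableSet Q
  pos : ∀ n, ∀ Q ∈ part n, 0 < μ Q
  fin : ∀ n, ∀ Q ∈ part n, μ Q < ⊤
  disjoint : ∀ n, (part n).PairwiseDisjoint id
  cover : ∀ n, ⋃₀ part n = Set.univ
  refines : ∀ n, ∀ Q ∈ part (n + 1), ∃ P ∈ part n, Q ⊆ P

variable {Ω : Type*} [MeasurableSpace Ω] {μ : MeasureTheory.Measure Ω}

/-- The tree `𝒬 = ⋃ₙ 𝒬ₙ` of all partition sets. -/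
def MartingaleGrid.tree (G : MartingaleGrid Ω μ) : Set (Set Ω) :=
  ⋃ n : ℤ, G.part n

/-- The children of `P`: the maximal elements of the tree strictly contained in `P`. -/
def MartingaleGrid.children (G : MartingaleGrid Ω μ) (P : Set Ω) : Set (Set Ω) :=
  {Q | Q ∈ G.tree ∧ Q ⊂ P ∧ ∀ R ∈ G.tree, Q ⊆ R → R ⊂ P → R = Q}

/-- The martingale difference `Δ_P f = Σ_{Q child of P} 1_Q (⟨f⟩_Q − ⟨f⟩_P)`. -/
noncomputable def MartingaleGrid.mdiff (G : MartingaleGrid Ω μ) (P : Set Ω)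
    (f : Ω → ℝ) (x : Ω) : ℝ :=
  ∑' Q : G.children P,
    Set.indicator (Q : Set Ω)
      (fun _ => (⨍ y in (Q : Set Ω), f y ∂μ) - ⨍ y in P, f y ∂μ) x

/-!
Reduce to a finite family `s` of grid cubes; it is laminar. Let `M` be the maximal function of
`F = |f|` over `s`. The maximal cubes of `{Q ∈ s | τ < ⟨F⟩_Q}` are disjoint and cover
`{M > τ}`; this gives both the packing bound `∑_{⟨F⟩_Q > τ} a_Q ≤ μ {M > τ}` and the weak-type
bound `τ μ {M > τ} ≤ ∫_{M > τ} F`. Integrating them against `2τ dτ` (layer cake) yields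
`∑_Q a_Q ⟨F⟩_Q² ≤ ‖M‖₂²` and `‖M‖₂² ≤ 2 ∫ F M ≤ 2 ‖F‖₂² + ‖M‖₂² / 2`, hence `‖M‖₂² ≤ 4 ‖F‖₂²`.
The absorption is legitimate because `M` is bounded and supported on a set of finite measure.
-/

open Set
open scoped ENNReal

namespace ENNReal

theorem two_mul_le_add_sq (a b : ℝ≥0∞) : 2 * a * b ≤ a ^ 2 + b ^ 2 := by
  rcases eq_top_or_lt_top a with rfl | ha
  · simp
  rcases eq_top_or_lt_top b with rfl | hb
  · simp
  lift a to NNReal using ha.ne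
  lift b to NNReal using hb.ne
  exact_mod_cast _root_.two_mul_le_add_sq a b

theorem sum_le_tsum_subtype {β : Type*} {S : Set β} {u : Finset β} {f : β → ℝ≥0∞}
    (hu : ↑u ⊆ S) : ∑ x ∈ u, f x ≤ ∑' x : S, f x := by
  classical
  rw [← Finset.sum_subtype_of_mem f fun x hx => hu hx]
  exact ENNReal.sum_le_tsum _

end ENNReal

theorem Ioi_inter_setOf_ofReal_lt (c : ℝ≥0∞) :
    Ioi 0 ∩ {t : ℝ | ENNReal.ofReal t < c} = if c = ⊤ then Ioi 0 else Ioo 0 c.toReal := by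
  ext t
  split_ifs with hc
  · simp [hc]
  · simp only [mem_inter_iff, mem_Ioi, mem_Ioo, and_congr_right_iff]
    exact fun ht => ENNReal.ofReal_lt_iff_lt_toReal ht.le hc

theorem lintegral_Ioo_ofReal_two_mul {b : ℝ} (hb : 0 ≤ b) :
    ∫⁻ t in Ioo 0 b, ENNReal.ofReal (2 * t) = ENNReal.ofReal (b ^ 2) := by
  rw [← ofReal_integral_eq_lintegral_ofReal, ← integral_Ioc_eq_integral_Ioo,
    ← intervalIntegral.integral_of_le hb, intervalIntegral.integral_const_mul, integral_id]
  · ring_nf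
  · exact (continuous_const.mul continuous_id).integrableOn_Icc.mono_set Ioo_subset_Icc_self
  · filter_upwards [self_mem_ae_restrict measurableSet_Ioo] with t ht
    simp only [Pi.zero_apply]
    linarith [ht.1]

theorem eq_lintegral_Ioi_indicator_one (c : ℝ≥0∞) :
    c = ∫⁻ t in Ioi 0, {t : ℝ | ENNReal.ofReal t < c}.indicator 1 t := by
  rw [lintegral_indicator_one (measurableSet_lt ENNReal.measurable_ofReal measurable_const),
    Measure.restrict_apply' measurableSet_Ioi, inter_comm, Ioi_inter_setOf_ofReal_lt]
  split_ifs with hc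
  · simp [hc]
  · simp [ENNReal.ofReal_toReal hc]

theorem sq_eq_lintegral_Ioi_indicator (c : ℝ≥0∞) :
    c ^ 2 = ∫⁻ t in Ioi 0, {t : ℝ | ENNReal.ofReal t < c}.indicator
      (fun t => ENNReal.ofReal (2 * t)) t := by
  rw [lintegral_indicator (measurableSet_lt ENNReal.measurable_ofReal measurable_const),
    Measure.restrict_restrict (measurableSet_lt ENNReal.measurable_ofReal measurable_const),
    inter_comm, Ioi_inter_setOf_ofReal_lt]
  split_ifs with hc
  · rw [hc, ENNReal.top_pow two_ne_zero, eq_comm]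
    refine ENNReal.eq_top_of_forall_nnreal_le fun r => ?_
    calc (r : ℝ≥0∞) ≤ ENNReal.ofReal ((r + 1) ^ 2) := by
          rw [← ENNReal.ofReal_coe_nnreal]
          exact ENNReal.ofReal_le_ofReal (by nlinarith [r.2])
      _ = ∫⁻ t in Ioo 0 (r + 1 : ℝ), ENNReal.ofReal (2 * t) :=
          (lintegral_Ioo_ofReal_two_mul (by positivity)).symm
      _ ≤ ∫⁻ t in Ioi 0, ENNReal.ofReal (2 * t) := lintegral_mono_set Ioo_subset_Ioi_self
  · rw [lintegral_Ioo_ofReal_two_mul ENNReal.toReal_nonneg,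
      ENNReal.ofReal_pow ENNReal.toReal_nonneg, ENNReal.ofReal_toReal hc]

section LayerCake

variable [SFinite μ] {g w : Ω → ℝ≥0∞}

theorem lintegral_mul_lintegral_Ioi_indicator (hg : Measurable g) (hw : Measurable w)
    {φ : ℝ → ℝ≥0∞} (hφ : Measurable φ) :
    ∫⁻ x, w x * (∫⁻ t in Ioi 0, {t : ℝ | ENNReal.ofReal t < g x}.indicator φ t) ∂μ =
      ∫⁻ t in Ioi 0, φ t * ∫⁻ x in {x | ENNReal.ofReal t < g x}, w x ∂μ := by
  set S := {p : Ω × ℝ | ENNReal.ofReal p.2 < g p.1}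
  have hS : MeasurableSet S := measurableSet_lt (by fun_prop) (by fun_prop)
  have hK : Measurable (S.indicator fun p => w p.1 * φ p.2) :=
    (by fun_prop : Measurable fun p : Ω × ℝ => w p.1 * φ p.2).indicator hS
  calc ∫⁻ x, w x * (∫⁻ t in Ioi 0, {t : ℝ | ENNReal.ofReal t < g x}.indicator φ t) ∂μ
      = ∫⁻ x, (∫⁻ t in Ioi 0, S.indicator (fun p => w p.1 * φ p.2) (x, t)) ∂μ := by
        refine lintegral_congr fun x => ?_
        rw [← lintegral_const_mul _ (hφ.indicator (measurableSet_lt (by fun_prop) (by fun_prop)))]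
        simp only [S, indicator_apply, mem_ofPred_eq, mul_ite, mul_zero]
    _ = ∫⁻ t in Ioi 0, ∫⁻ x, S.indicator (fun p => w p.1 * φ p.2) (x, t) ∂μ :=
        lintegral_lintegral_swap (f := fun x t => S.indicator (fun p => w p.1 * φ p.2) (x, t))
          hK.aemeasurable
    _ = ∫⁻ t in Ioi 0, φ t * ∫⁻ x in {x | ENNReal.ofReal t < g x}, w x ∂μ := by
        refine lintegral_congr fun t => ?_
        rw [← lintegral_indicator (measurableSet_lt (by fun_prop) (by fun_prop)),
          ← lintegral_const_mul _ (hw.indicator (measurableSet_lt (by fun_prop) (by fun_prop)))]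
        simp only [S, indicator_apply, mem_ofPred_eq, mul_ite, mul_zero, mul_comm]

theorem lintegral_sq_eq_lintegral_meas_lt (hg : Measurable g) :
    ∫⁻ x, g x ^ 2 ∂μ = ∫⁻ t in Ioi 0, ENNReal.ofReal (2 * t) * μ {x | ENNReal.ofReal t < g x} := by
  have h := lintegral_mul_lintegral_Ioi_indicator (μ := μ) hg measurable_one
    (by fun_prop : Measurable fun t : ℝ => ENNReal.ofReal (2 * t))
  simpa only [Pi.one_apply, one_mul, ← sq_eq_lintegral_Ioi_indicator, setLIntegral_one] using h

theorem lintegral_mul_eq_lintegral_setLIntegral_lt (hg : Measurable g) (hw : Measurable w) :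
    ∫⁻ x, w x * g x ∂μ = ∫⁻ t in Ioi 0, ∫⁻ x in {x | ENNReal.ofReal t < g x}, w x ∂μ := by
  have h := lintegral_mul_lintegral_Ioi_indicator (μ := μ) hg hw measurable_one
  simpa only [Pi.one_apply, one_mul, ← eq_lintegral_Ioi_indicator_one] using h

end LayerCake

theorem measure_sUnion_eq_sum_of_cover {α : Type*} [MeasurableSpace α] {s u : Finset (Set α)}
    (hus : u ⊆ s) (hu : (u : Set (Set α)).PairwiseDisjoint id) (hcover : ∀ Q ∈ s, ∃ P ∈ u, Q ⊆ P)
    (hm : ∀ P ∈ u, MeasurableSet P) (ν : Measure α) :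
    ν (⋃₀ s) = ∑ P ∈ u, ν P := by
  have hU : ⋃₀ (s : Set (Set α)) = ⋃ P ∈ u, P := by
    refine subset_antisymm (sUnion_subset fun Q hQ => ?_) (iUnion₂_subset fun P hP => ?_)
    · obtain ⟨P, hP, hQP⟩ := hcover Q hQ
      exact hQP.trans (subset_biUnion_of_mem (u := id) hP)
    · exact subset_sUnion_of_mem (hus hP)
  rw [hU]
  exact measure_biUnion_finset hu hm

def IsLaminar {α : Type*} (s : Set (Set α)) : Prop :=
  s.Pairwise fun P Q => P ⊆ Q ∨ Q ⊆ P ∨ Disjoint P Q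

namespace IsLaminar

variable {α : Type*}

theorem mono {s t : Set (Set α)} (hs : IsLaminar s) (hts : t ⊆ s) : IsLaminar t :=
  Set.Pairwise.mono hts hs

variable {s : Finset (Set α)}

theorem exists_disjoint_cover (hs : IsLaminar (s : Set (Set α))) :
    ∃ u ⊆ s, (u : Set (Set α)).PairwiseDisjoint id ∧ ∀ Q ∈ s, ∃ P ∈ u, Q ⊆ P := by
  classical
  refine ⟨{P ∈ s | Maximal (· ∈ s) P}, Finset.filter_subset _ _, ?_, fun Q hQ => ?_⟩
  · intro P hP P' hP' hne
    simp only [Finset.coe_filter, mem_ofPred_eq] at hP hP'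
    rcases hs hP.1 hP'.1 hne with h | h | h
    · exact absurd (hP.2.eq_of_subset hP'.1 h) hne
    · exact absurd (hP'.2.eq_of_subset hP.1 h).symm hne
    · exact h
  · obtain ⟨P, hQP, hP⟩ := s.exists_le_maximal hQ
    exact ⟨P, Finset.mem_filter.2 ⟨hP.1, hP⟩, hQP⟩

variable [MeasurableSpace α]

theorem measure_sUnion_le (hs : IsLaminar (s : Set (Set α))) (hm : ∀ Q ∈ s, MeasurableSet Q)
    {ν₁ ν₂ : Measure α} (h : ∀ Q ∈ s, ν₁ Q ≤ ν₂ Q) : ν₁ (⋃₀ s) ≤ ν₂ (⋃₀ s) := by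
  obtain ⟨u, hus, hu, hcover⟩ := hs.exists_disjoint_cover
  have hmu : ∀ P ∈ u, MeasurableSet P := fun P hP => hm P (hus hP)
  rw [measure_sUnion_eq_sum_of_cover hus hu hcover hmu,
    measure_sUnion_eq_sum_of_cover hus hu hcover hmu]
  exact Finset.sum_le_sum fun P hP => h P (hus hP)

open Classical in
theorem sum_le_measure_sUnion (hs : IsLaminar (s : Set (Set α))) (hm : ∀ Q ∈ s, MeasurableSet Q)
    {ν : Measure α} {a : Set α → ℝ≥0∞} (hC : ∀ P ∈ s, ∑ Q ∈ s with Q ⊆ P, a Q ≤ ν P) :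
    ∑ Q ∈ s, a Q ≤ ν (⋃₀ s) := by
  obtain ⟨u, hus, hu, hcover⟩ := hs.exists_disjoint_cover
  rw [measure_sUnion_eq_sum_of_cover hus hu hcover fun P hP => hm P (hus hP)]
  calc ∑ Q ∈ s, a Q ≤ ∑ Q ∈ s, ∑ P ∈ u, if Q ⊆ P then a Q else 0 := by
        refine Finset.sum_le_sum fun Q hQ => ?_
        obtain ⟨P, hP, hQP⟩ := hcover Q hQ
        simpa [hQP] using Finset.single_le_sum (f := fun P => if Q ⊆ P then a Q else 0)
          (fun _ _ => zero_le) hP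
    _ = ∑ P ∈ u, ∑ Q ∈ s with Q ⊆ P, a Q := by
        rw [Finset.sum_comm]
        simp only [Finset.sum_filter]
    _ ≤ ∑ P ∈ u, ν P := Finset.sum_le_sum fun P hP => hC P (hus hP)

end IsLaminar

noncomputable def maximalFunction (μ : Measure Ω) (s : Finset (Set Ω)) (F : Ω → ℝ≥0∞) (x : Ω) :
    ℝ≥0∞ :=
  ⨆ Q ∈ s, Q.indicator (fun _ => ⨍⁻ y in Q, F y ∂μ) x

theorem mul_measure_le_setLIntegral_of_lt_setLAverage {F : Ω → ℝ≥0∞} {Q : Set Ω} {τ : ℝ≥0∞}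
    (h : τ < ⨍⁻ x in Q, F x ∂μ) : τ * μ Q ≤ ∫⁻ x in Q, F x ∂μ := by
  -- an average over a set of infinite measure is `0`
  have hQ : μ Q ≠ ⊤ := fun hQ => by simp [setLAverage_eq, hQ] at h
  calc τ * μ Q ≤ (⨍⁻ x in Q, F x ∂μ) * μ Q := by gcongr
    _ = ∫⁻ x in Q, F x ∂μ := by rw [mul_comm, measure_mul_setLAverage _ hQ]

theorem setLIntegral_ne_top_of_lintegral_sq_ne_top {F : Ω → ℝ≥0∞} {Q : Set Ω} (hQ : μ Q ≠ ⊤)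
    (hF : ∫⁻ x, F x ^ 2 ∂μ ≠ ⊤) : ∫⁻ x in Q, F x ∂μ ≠ ⊤ := by
  have hle : ∫⁻ x in Q, F x ∂μ ≤ ∫⁻ x in Q, 1 + F x ^ 2 ∂μ := lintegral_mono fun x =>
    calc F x ≤ 2 * F x * 1 := by rw [mul_one, two_mul]; exact le_add_self
      _ ≤ F x ^ 2 + 1 ^ 2 := ENNReal.two_mul_le_add_sq _ _
      _ = 1 + F x ^ 2 := by rw [one_pow, add_comm]
  refine ne_top_of_le_ne_top ?_ hle
  rw [lintegral_add_left measurable_const, setLIntegral_one]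
  exact ENNReal.add_ne_top.2 ⟨hQ, ne_top_of_le_ne_top hF (setLIntegral_le_lintegral _ _)⟩

section MaximalFunction

variable {s : Finset (Set Ω)} {F : Ω → ℝ≥0∞}

theorem measurable_maximalFunction (hm : ∀ Q ∈ s, MeasurableSet Q) :
    Measurable (maximalFunction μ s F) :=
  Measurable.biSup _ s.countable_toSet fun Q hQ => measurable_const.indicator (hm Q hQ)

theorem setOf_lt_maximalFunction (τ : ℝ≥0∞) :
    {x | τ < maximalFunction μ s F x} = ⋃₀ ↑{Q ∈ s | τ < ⨍⁻ y in Q, F y ∂μ} := by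
  ext x
  simp only [maximalFunction, mem_ofPred_eq, lt_iSup_iff, Finset.coe_filter, mem_sUnion]
  refine exists_congr fun Q => ⟨fun ⟨hQ, hlt⟩ => ?_, fun ⟨⟨hQ, hlt⟩, hx⟩ => ?_⟩
  · by_cases hx : x ∈ Q
    · exact ⟨⟨hQ, by rwa [indicator_of_mem hx] at hlt⟩, hx⟩
    · simp [hx] at hlt
  · exact ⟨hQ, by rwa [indicator_of_mem hx]⟩

theorem maximalFunction_le_indicator (x : Ω) :
    maximalFunction μ s F x ≤ (⋃₀ s).indicator (fun _ => ∑ Q ∈ s, ⨍⁻ y in Q, F y ∂μ) x := by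
  refine iSup₂_le fun Q hQ => ?_
  by_cases hx : x ∈ Q
  · rw [indicator_of_mem hx, indicator_of_mem (subset_sUnion_of_mem hQ hx)]
    exact Finset.single_le_sum (f := fun Q => ⨍⁻ y in Q, F y ∂μ) (fun _ _ => zero_le) hQ
  · simp [hx]

theorem lintegral_maximalFunction_sq_ne_top (hm : ∀ Q ∈ s, MeasurableSet Q)
    (hfin : ∀ Q ∈ s, μ Q ≠ ⊤) (hF : ∫⁻ x, F x ^ 2 ∂μ ≠ ⊤) :
    ∫⁻ x, maximalFunction μ s F x ^ 2 ∂μ ≠ ⊤ := by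
  set C := ∑ Q ∈ s, ⨍⁻ y in Q, F y ∂μ
  have hC : C ≠ ⊤ := ENNReal.sum_ne_top.2 fun Q hQ =>
    (setLAverage_lt_top (setLIntegral_ne_top_of_lintegral_sq_ne_top (hfin Q hQ) hF)).ne
  have hU : μ (⋃₀ s) ≠ ⊤ := by
    rw [sUnion_eq_biUnion]
    exact ne_top_of_le_ne_top (ENNReal.sum_ne_top.2 hfin) (measure_biUnion_finset_le s id)
  have hbound (x : Ω) : maximalFunction μ s F x ^ 2 ≤ (⋃₀ s).indicator (fun _ => C ^ 2) x := by
    have hM := maximalFunction_le_indicator (μ := μ) (F := F) (s := s) x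
    by_cases hx : x ∈ ⋃₀ s
    · rw [indicator_of_mem hx] at hM ⊢
      gcongr
    · rw [indicator_of_notMem hx] at hM ⊢
      simp [nonpos_iff_eq_zero.1 hM]
  refine ne_top_of_le_ne_top ?_ (lintegral_mono hbound)
  rw [lintegral_indicator_const (s.finite_toSet.measurableSet_sUnion hm)]
  exact ENNReal.mul_ne_top (ENNReal.pow_ne_top hC) hU

end MaximalFunction

namespace IsLaminar

variable {s : Finset (Set Ω)} {F : Ω → ℝ≥0∞}

theorem mul_meas_lt_maximalFunction_le (hs : IsLaminar (s : Set (Set Ω)))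
    (hm : ∀ Q ∈ s, MeasurableSet Q) (τ : ℝ≥0∞) :
    τ * μ {x | τ < maximalFunction μ s F x} ≤
      ∫⁻ x in {x | τ < maximalFunction μ s F x}, F x ∂μ := by
  set t := {Q ∈ s | τ < ⨍⁻ y in Q, F y ∂μ}
  have hmt : ∀ Q ∈ t, MeasurableSet Q := fun Q hQ => hm Q (Finset.mem_filter.1 hQ).1
  have h := (hs.mono (Finset.coe_subset.2 (Finset.filter_subset _ s))).measure_sUnion_le hmt
    (ν₁ := τ • μ) (ν₂ := μ.withDensity F) fun Q hQ => by
      rw [Measure.smul_apply, smul_eq_mul, withDensity_apply _ (hmt Q hQ)]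
      exact mul_measure_le_setLIntegral_of_lt_setLAverage (Finset.mem_filter.1 hQ).2
  rwa [Measure.smul_apply, smul_eq_mul,
    withDensity_apply _ (t.finite_toSet.measurableSet_sUnion hmt), ← setOf_lt_maximalFunction] at h

open Classical in
theorem sum_le_meas_lt_maximalFunction (hs : IsLaminar (s : Set (Set Ω)))
    (hm : ∀ Q ∈ s, MeasurableSet Q) {a : Set Ω → ℝ≥0∞}
    (hC : ∀ P ∈ s, ∑ Q ∈ s with Q ⊆ P, a Q ≤ μ P) (τ : ℝ≥0∞) :
    ∑ Q ∈ s with τ < ⨍⁻ y in Q, F y ∂μ, a Q ≤ μ {x | τ < maximalFunction μ s F x} := by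
  rw [setOf_lt_maximalFunction]
  refine (hs.mono (Finset.coe_subset.2 (Finset.filter_subset _ s))).sum_le_measure_sUnion
    (fun Q hQ => hm Q (Finset.mem_filter.1 hQ).1) fun P hP => ?_
  refine le_trans (Finset.sum_le_sum_of_subset fun Q hQ => ?_) (hC P (Finset.mem_filter.1 hP).1)
  simp only [Finset.mem_filter] at hQ ⊢
  exact ⟨hQ.1.1, hQ.2⟩

variable [SFinite μ]

open Classical in
theorem sum_mul_setLAverage_sq_le_lintegral_maximalFunction_sq
    (hs : IsLaminar (s : Set (Set Ω))) (hm : ∀ Q ∈ s, MeasurableSet Q) {a : Set Ω → ℝ≥0∞}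
    (hC : ∀ P ∈ s, ∑ Q ∈ s with Q ⊆ P, a Q ≤ μ P) :
    ∑ Q ∈ s, a Q * (⨍⁻ y in Q, F y ∂μ) ^ 2 ≤ ∫⁻ x, maximalFunction μ s F x ^ 2 ∂μ := by
  have hφ : Measurable fun t : ℝ => ENNReal.ofReal (2 * t) := by fun_prop
  have hlt (c : ℝ≥0∞) : MeasurableSet {t : ℝ | ENNReal.ofReal t < c} :=
    measurableSet_lt ENNReal.measurable_ofReal measurable_const
  calc ∑ Q ∈ s, a Q * (⨍⁻ y in Q, F y ∂μ) ^ 2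
      = ∑ Q ∈ s, ∫⁻ t in Ioi 0, a Q * {t : ℝ | ENNReal.ofReal t < ⨍⁻ y in Q, F y ∂μ}.indicator
          (fun t => ENNReal.ofReal (2 * t)) t := by
        refine Finset.sum_congr rfl fun Q _ => ?_
        rw [sq_eq_lintegral_Ioi_indicator, lintegral_const_mul _ (hφ.indicator (hlt _))]
    _ = ∫⁻ t in Ioi 0, ENNReal.ofReal (2 * t) *
          ∑ Q ∈ s with ENNReal.ofReal t < ⨍⁻ y in Q, F y ∂μ, a Q := by
        rw [← lintegral_finsetSum _ fun Q _ => (hφ.indicator (hlt _)).const_mul _]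
        refine lintegral_congr fun t => ?_
        rw [Finset.sum_filter, Finset.mul_sum]
        simp only [indicator_apply, mem_ofPred_eq, mul_ite, mul_zero, zero_mul, mul_comm]
    _ ≤ ∫⁻ t in Ioi 0,
          ENNReal.ofReal (2 * t) * μ {x | ENNReal.ofReal t < maximalFunction μ s F x} :=
        lintegral_mono fun t => by gcongr; exact hs.sum_le_meas_lt_maximalFunction hm hC _
    _ = ∫⁻ x, maximalFunction μ s F x ^ 2 ∂μ :=
        (lintegral_sq_eq_lintegral_meas_lt (measurable_maximalFunction hm)).symm

theorem lintegral_maximalFunction_sq_le_two_mul (hs : IsLaminar (s : Set (Set Ω)))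
    (hm : ∀ Q ∈ s, MeasurableSet Q) (hF : Measurable F) :
    ∫⁻ x, maximalFunction μ s F x ^ 2 ∂μ ≤ 2 * ∫⁻ x, F x * maximalFunction μ s F x ∂μ := by
  rw [lintegral_sq_eq_lintegral_meas_lt (measurable_maximalFunction hm),
    lintegral_mul_eq_lintegral_setLIntegral_lt (measurable_maximalFunction hm) hF,
    ← lintegral_const_mul' 2 _ ENNReal.ofNat_ne_top]
  refine lintegral_mono fun t => ?_
  rw [ENNReal.ofReal_mul zero_le_two, ENNReal.ofReal_ofNat, mul_assoc]
  gcongr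
  exact hs.mul_meas_lt_maximalFunction_le hm _

theorem lintegral_maximalFunction_sq_le (hs : IsLaminar (s : Set (Set Ω)))
    (hm : ∀ Q ∈ s, MeasurableSet Q) (hfin : ∀ Q ∈ s, μ Q ≠ ⊤) (hF : Measurable F) :
    ∫⁻ x, maximalFunction μ s F x ^ 2 ∂μ ≤ 4 * ∫⁻ x, F x ^ 2 ∂μ := by
  set M := maximalFunction μ s F
  rcases eq_or_ne (∫⁻ x, F x ^ 2 ∂μ) ⊤ with hE | hE
  · simp [hE]
  refine ENNReal.le_of_add_le_add_right (lintegral_maximalFunction_sq_ne_top hm hfin hE) ?_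
  calc ∫⁻ x, M x ^ 2 ∂μ + ∫⁻ x, M x ^ 2 ∂μ ≤ 2 * (2 * ∫⁻ x, F x * M x ∂μ) := by
        rw [← two_mul]; gcongr; exact hs.lintegral_maximalFunction_sq_le_two_mul hm hF
    _ = ∫⁻ x, 2 * (2 * F x) * M x ∂μ := by
        rw [← mul_assoc, ← lintegral_const_mul' _ _ (by norm_num)]
        simp only [mul_assoc]
    _ ≤ ∫⁻ x, (2 * F x) ^ 2 + M x ^ 2 ∂μ := lintegral_mono fun x => ENNReal.two_mul_le_add_sq _ _
    _ = 4 * ∫⁻ x, F x ^ 2 ∂μ + ∫⁻ x, M x ^ 2 ∂μ := by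
        rw [lintegral_add_left (by fun_prop), ← lintegral_const_mul _ (by fun_prop)]
        norm_num [mul_pow]

open Classical in
theorem sum_mul_setLAverage_sq_le (hs : IsLaminar (s : Set (Set Ω)))
    (hm : ∀ Q ∈ s, MeasurableSet Q) (hfin : ∀ Q ∈ s, μ Q ≠ ⊤) (hF : AEMeasurable F μ)
    {a : Set Ω → ℝ≥0∞} (hC : ∀ P ∈ s, ∑ Q ∈ s with Q ⊆ P, a Q ≤ μ P) :
    ∑ Q ∈ s, a Q * (⨍⁻ y in Q, F y ∂μ) ^ 2 ≤ 4 * ∫⁻ x, F x ^ 2 ∂μ := by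
  have hsq : ∫⁻ x, F x ^ 2 ∂μ = ∫⁻ x, hF.mk F x ^ 2 ∂μ :=
    lintegral_congr_ae (hF.ae_eq_mk.fun_comp (· ^ 2))
  have havg (Q : Set Ω) : ⨍⁻ y in Q, F y ∂μ = ⨍⁻ y in Q, hF.mk F y ∂μ :=
    laverage_congr (ae_restrict_of_ae hF.ae_eq_mk)
  simp only [havg, hsq]
  exact (hs.sum_mul_setLAverage_sq_le_lintegral_maximalFunction_sq hm hC).trans
    (hs.lintegral_maximalFunction_sq_le hm hfin hF.measurable_mk)

end IsLaminar

theorem eLpNorm_two_sq_eq_lintegral (f : Ω → ℝ) :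
    eLpNorm f 2 μ ^ 2 = ∫⁻ x, ENNReal.ofReal |f x| ^ 2 ∂μ := by
  have h := eLpNorm_nnreal_pow_eq_lintegral (f := f) (μ := μ) (p := 2) two_ne_zero
  simpa [Real.enorm_eq_ofReal_abs] using h

namespace MartingaleGrid

variable (G : MartingaleGrid Ω μ)

theorem exists_superset_mem_part {m n : ℤ} (hnm : n ≤ m) {Q : Set Ω} (hQ : Q ∈ G.part m) :
    ∃ P ∈ G.part n, Q ⊆ P := by
  induction m, hnm using Int.leInduction generalizing Q with
  | base => exact ⟨Q, hQ, subset_rfl⟩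
  | succ k _ ih =>
    obtain ⟨R, hR, hQR⟩ := G.refines k Q hQ
    obtain ⟨P, hP, hRP⟩ := ih hR
    exact ⟨P, hP, hQR.trans hRP⟩

theorem subset_or_disjoint_of_le {m n : ℤ} (hnm : n ≤ m) {Q R : Set Ω} (hQ : Q ∈ G.part m)
    (hR : R ∈ G.part n) : Q ⊆ R ∨ Disjoint Q R := by
  obtain ⟨P, hP, hQP⟩ := G.exists_superset_mem_part hnm hQ
  rcases eq_or_ne P R with rfl | hPR
  · exact Or.inl hQP
  · exact Or.inr ((G.disjoint n hP hR hPR).mono_left hQP)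

theorem isLaminar_tree : IsLaminar G.tree := by
  intro Q hQ R hR _
  obtain ⟨m, hQ⟩ := mem_iUnion.1 hQ
  obtain ⟨n, hR⟩ := mem_iUnion.1 hR
  rcases le_total n m with h | h
  · rcases G.subset_or_disjoint_of_le h hQ hR with h' | h'
    · exact Or.inl h'
    · exact Or.inr (Or.inr h')
  · rcases G.subset_or_disjoint_of_le h hR hQ with h' | h'
    · exact Or.inr (Or.inl h')
    · exact Or.inr (Or.inr h'.symm)

theorem measurableSet_of_mem_tree {Q : Set Ω} (hQ : Q ∈ G.tree) : MeasurableSet Q := by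
  obtain ⟨n, hQ⟩ := mem_iUnion.1 hQ
  exact G.measurableSet n Q hQ

theorem measure_ne_top_of_mem_tree {Q : Set Ω} (hQ : Q ∈ G.tree) : μ Q ≠ ⊤ := by
  obtain ⟨n, hQ⟩ := mem_iUnion.1 hQ
  exact (G.fin n Q hQ).ne

end MartingaleGrid

/-- Dyadic Carleson embedding theorem: if the nonnegative coefficients `a_Q`
satisfy `Σ_{Q ⊆ P} a_Q ≤ μ(P)` for every `P ∈ 𝒬`, then
`Σ_Q a_Q ⟨|f|⟩_Q² ≤ 4‖f‖₂²`. -/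
theorem carleson_embedding (μ : Measure Ω) [SigmaFinite μ] (G : MartingaleGrid Ω μ)
    (a : Set Ω → ENNReal)
    (hC : ∀ P ∈ G.tree, ∑' Q : {Q | Q ∈ G.tree ∧ Q ⊆ P}, a Q.1 ≤ μ P)
    (f : Ω → ℝ) (hf : MemLp f 2 μ) :
    ∑' Q : G.tree,
        a Q.1 * ((∫⁻ y in (Q : Set Ω), ENNReal.ofReal |f y| ∂μ) / μ (Q : Set Ω)) ^ 2
      ≤ 4 * eLpNorm f 2 μ ^ 2 := by
  classical
  simp only [← setLAverage_eq]
  rw [eLpNorm_two_sq_eq_lintegral, ENNReal.tsum_eq_iSup_sum]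
  refine iSup_le fun t => ?_
  set s := t.map (Function.Embedding.subtype (· ∈ G.tree))
  have hs : ↑s ⊆ G.tree := by simp [s]
  refine (Finset.sum_map t (Function.Embedding.subtype _)
    fun Q => a Q * (⨍⁻ y in Q, ENNReal.ofReal |f y| ∂μ) ^ 2).symm.trans_le ?_
  refine (G.isLaminar_tree.mono hs).sum_mul_setLAverage_sq_le
    (fun Q hQ => G.measurableSet_of_mem_tree (hs hQ))
    (fun Q hQ => G.measure_ne_top_of_mem_tree (hs hQ))
    hf.1.aemeasurable.abs.ennreal_ofReal fun P hP => ?_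
  refine (ENNReal.sum_le_tsum_subtype fun Q hQ => ?_).trans (hC P (hs hP))
  rw [Finset.coe_filter] at hQ
  exact ⟨hs hQ.1, hQ.2⟩
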